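/- arXiv:1104.0028 — 3 statements merged into one kernel-verified Lean document; each statement's English description precedes it below -/
import Mathlib

section
/- Let G = ℝⁿ with length function ℓ(x) := √⟨x, Ax⟩ for a positive definite symmetric n×n matrix A. For p ∈ ℝⁿ let φ_p be the character φ_p(x) = e^{i⟨x,p⟩} of ℝⁿ. Then the Pontryagin dual length function ℓ̂(φ_p) := sup_{x ≠ 0} ℓ^{arc}(e^{i⟨x,p⟩})/ℓ(x) equals √⟨p, A⁻¹p⟩, where ℓ^{arc}(e^{iθ}) denotes the arclength distance from 1 to e^{iθ} on the unit circle (i.e. |θ| reduced mod 2π to [0,π]). -/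
/-!
Cauchy–Schwarz for the inner product `⟨x, A y⟩` applied to `x` and `A⁻¹ p` gives
`|⟨x, p⟩| ≤ √⟨x, A x⟩ √⟨p, A⁻¹ p⟩`, and `larc θ ≤ |θ|`, so every quotient is at most
`√⟨p, A⁻¹ p⟩`. Equality holds in Cauchy–Schwarz along `x ∥ A⁻¹ p`, and on that ray the
pairing `⟨x, p⟩` reaches `π`, where `larc` still agrees with `|·|`.
-/

open Matrix

/-- arclength distance from `1` to `e^{iθ}` on the unit circle:
`min_{k ∈ ℤ} |θ + 2πk|`. -/
noncomputable def larc (θ : ℝ) : ℝ := ⨅ k : ℤ, |θ + 2 * Real.pi * k|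

open Real

lemma larc_le_abs (θ : ℝ) : larc θ ≤ |θ| := by
  simpa [larc] using
    ciInf_le (f := fun k : ℤ => |θ + 2 * π * k|) ⟨0, by rintro _ ⟨k, rfl⟩; positivity⟩ 0

lemma larc_of_nonneg_of_le_pi {θ : ℝ} (h0 : 0 ≤ θ) (hπ : θ ≤ π) : larc θ = θ := by
  refine le_antisymm ((larc_le_abs θ).trans_eq (abs_of_nonneg h0)) (le_ciInf fun k => ?_)
  rcases le_or_gt 0 k with hk | hk
  · have : (0 : ℝ) ≤ k := by exact_mod_cast hk
    exact le_abs.2 (.inl (by nlinarith [pi_pos]))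
  · have : (k : ℝ) ≤ -1 := by exact_mod_cast Int.le_sub_one_of_lt hk
    exact le_abs.2 (.inr (by nlinarith [pi_pos]))

variable {ι : Type*} [Fintype ι]

theorem Matrix.PosSemidef.abs_dotProduct_mulVec_le {A : Matrix ι ι ℝ} (hA : A.PosSemidef)
    (x y : ι → ℝ) : |x ⬝ᵥ A *ᵥ y| ≤ √(x ⬝ᵥ A *ᵥ x) * √(y ⬝ᵥ A *ᵥ y) := by
  let _ := A.toSeminormedAddCommGroup hA
  let _ := A.toInnerProductSpace hA
  have h : |(A *ᵥ y) ⬝ᵥ star x| ≤ √((A *ᵥ x) ⬝ᵥ star x) * √((A *ᵥ y) ⬝ᵥ star y) :=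
    abs_real_inner_le_norm x y
  simpa only [star_trivial, dotProduct_comm _ x, dotProduct_comm _ y] using h

variable [DecidableEq ι] {A : Matrix ι ι ℝ}

lemma Matrix.PosDef.mulVec_inv_mulVec (hA : A.PosDef) (p : ι → ℝ) : A *ᵥ (A⁻¹ *ᵥ p) = p := by
  rw [mulVec_mulVec, mul_nonsing_inv A ((isUnit_iff_isUnit_det A).1 hA.isUnit), one_mulVec]

theorem Matrix.PosDef.abs_dotProduct_le (hA : A.PosDef) (x p : ι → ℝ) :
    |x ⬝ᵥ p| ≤ √(x ⬝ᵥ A *ᵥ x) * √(p ⬝ᵥ A⁻¹ *ᵥ p) := by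
  simpa only [hA.mulVec_inv_mulVec, dotProduct_comm _ p] using
    hA.posSemidef.abs_dotProduct_mulVec_le x (A⁻¹ *ᵥ p)

lemma larc_div_sqrt_le (hA : A.PosDef) (p : ι → ℝ) {x : ι → ℝ} (hx : x ≠ 0) :
    larc (x ⬝ᵥ p) / √(x ⬝ᵥ A *ᵥ x) ≤ √(p ⬝ᵥ A⁻¹ *ᵥ p) := by
  have hxAx : 0 < √(x ⬝ᵥ A *ᵥ x) := sqrt_pos.2 (hA.dotProduct_mulVec_pos hx)
  rw [div_le_iff₀' hxAx]
  exact (larc_le_abs _).trans (hA.abs_dotProduct_le x p)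

lemma exists_larc_div_sqrt_eq (hA : A.PosDef) {p : ι → ℝ} (hp : p ≠ 0) :
    ∃ x ≠ 0, larc (x ⬝ᵥ p) / √(x ⬝ᵥ A *ᵥ x) = √(p ⬝ᵥ A⁻¹ *ᵥ p) := by
  set q := p ⬝ᵥ A⁻¹ *ᵥ p
  have hq : 0 < q := hA.inv.dotProduct_mulVec_pos hp
  set x := (π / q) • A⁻¹ *ᵥ p
  have hxp : x ⬝ᵥ p = π := by
    rw [smul_dotProduct, dotProduct_comm, smul_eq_mul, div_mul_cancel₀ _ hq.ne']
  have hxAx : x ⬝ᵥ A *ᵥ x = (π / q) ^ 2 * q := by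
    rw [mulVec_smul, hA.mulVec_inv_mulVec, dotProduct_smul, hxp, smul_eq_mul]
    field_simp
  refine ⟨x, fun h => pi_ne_zero (by simp [← hxp, h]), ?_⟩
  rw [hxp, larc_of_nonneg_of_le_pi pi_pos.le le_rfl, hxAx, sqrt_mul (by positivity),
    sqrt_sq (by positivity)]
  field_simp
  exact (sq_sqrt hq.le).symm

/-- for `ℝⁿ` with length `ℓ(x) = √⟨x,Ax⟩` (`A` symmetric positive definite),
the Pontryagin dual length of the character `φ_p(x) = e^{i⟨x,p⟩}` is `√⟨p,A⁻¹p⟩`. -/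
theorem pontryagin_dual_length_euclidean {n : ℕ}
    (A : Matrix (Fin n) (Fin n) ℝ) (hA : A.PosDef) (p : Fin n → ℝ) :
    (⨆ x : {x : Fin n → ℝ // x ≠ 0},
        larc ((x : Fin n → ℝ) ⬝ᵥ p) /
          Real.sqrt ((x : Fin n → ℝ) ⬝ᵥ A.mulVec (x : Fin n → ℝ))) =
      Real.sqrt (p ⬝ᵥ A⁻¹.mulVec p) := by
  rcases eq_or_ne p 0 with rfl | hp
  · simp [larc_of_nonneg_of_le_pi le_rfl pi_pos.le, Real.iSup_const_zero]
  obtain ⟨x₀, hx₀, hx₀_eq⟩ := exists_larc_div_sqrt_eq hA hp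
  have h_le (x : {x : Fin n → ℝ // x ≠ 0}) := larc_div_sqrt_le hA p x.2
  have : Nonempty {x : Fin n → ℝ // x ≠ 0} := ⟨⟨p, hp⟩⟩
  refine le_antisymm (ciSup_le h_le) ?_
  exact hx₀_eq ▸ le_ciSup_of_le ⟨_, Set.forall_mem_range.2 h_le⟩ ⟨x₀, hx₀⟩ le_rfl
end

section
/- Consider ℤ with length function ℓ(n) = α|n|, α > 0. Using the circle arclength length ℓ^{arc}(e^{iθ}) = min_{k∈ℤ}|θ+2πk| on U(1), the double-dual length restricted to one-dimensional representations (characters) satisfies: sup over characters χ_x(n) = e^{inx}, x ∈ (0,2π), of ℓ^{arc}(e^{inx})·α/ℓ^{arc}(e^{ix}) = α|n| for every integer n. In particular, the double-dual length of ℤ with respect to characters equals ℓ. -/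
open Real

lemma larc_le (θ : ℝ) (k : ℤ) : larc θ ≤ |θ + 2 * π * k| :=
  ciInf_le ⟨0, by rintro _ ⟨k, rfl⟩; exact abs_nonneg _⟩ k

lemma larc_nonneg (θ : ℝ) : 0 ≤ larc θ :=
  le_ciInf fun _ => abs_nonneg _

lemma larc_eq_abs {θ : ℝ} (h : |θ| ≤ π) : larc θ = |θ| := by
  refine le_antisymm (by simpa using larc_le θ 0) (le_ciInf fun k => ?_)
  rcases eq_or_ne k 0 with rfl | hk
  · simp
  have hk1 : (1 : ℝ) ≤ |(k : ℝ)| := by exact_mod_cast Int.one_le_abs hk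
  have h2π : 2 * π ≤ |2 * π * k| := by
    rw [abs_mul, abs_of_pos two_pi_pos]
    nlinarith [pi_pos]
  have htri : |2 * π * k| ≤ |θ + 2 * π * k| + |θ| := by
    simpa using abs_sub (θ + 2 * π * k) θ
  linarith

lemma larc_int_mul_le (n : ℤ) (x : ℝ) : larc (n * x) ≤ |(n : ℝ)| * larc x := by
  conv_rhs => rw [larc, Real.mul_iInf_of_nonneg (abs_nonneg _)]
  refine le_ciInf fun k => ?_
  calc larc (n * x) ≤ |n * x + 2 * π * (n * k : ℤ)| := larc_le _ (n * k)
    _ = |(n : ℝ)| * |x + 2 * π * k| := by rw [← abs_mul]; push_cast; ring_nf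

lemma larc_int_mul_div_larc_le {α : ℝ} (hα : 0 ≤ α) (n : ℤ) (x : ℝ) :
    larc (n * x) * α / larc x ≤ α * |(n : ℝ)| := by
  refine div_le_of_le_mul₀ (larc_nonneg x) (by positivity) ?_
  calc larc (n * x) * α ≤ |(n : ℝ)| * larc x * α :=
        mul_le_mul_of_nonneg_right (larc_int_mul_le n x) hα
    _ = α * |(n : ℝ)| * larc x := by ring

lemma larc_int_mul_eq {n : ℤ} {x : ℝ} (hx : |x| ≤ π) (hnx : |n * x| ≤ π) :
    larc (n * x) = |(n : ℝ)| * larc x := by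
  rw [larc_eq_abs hx, larc_eq_abs hnx, abs_mul]

lemma exists_mem_Ioo_larc_int_mul_div_larc_eq (α : ℝ) (n : ℤ) :
    ∃ x ∈ Set.Ioo 0 (2 * π), larc (n * x) * α / larc x = α * |(n : ℝ)| := by
  set m : ℝ := max 1 |(n : ℝ)|
  have hm : 0 < m := lt_max_of_lt_left one_pos
  have hx : 0 < π / m := div_pos pi_pos hm
  have hxπ : π / m ≤ π := div_le_self pi_pos.le (le_max_left _ _)
  have hnx : |(n : ℝ)| * (π / m) ≤ π := by
    rw [mul_div_assoc', div_le_iff₀ hm, mul_comm π]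
    exact mul_le_mul_of_nonneg_right (le_max_right _ _) pi_pos.le
  refine ⟨π / m, ⟨hx, by linarith [pi_pos]⟩, ?_⟩
  have hlarc : larc (π / m) = π / m := by rw [larc_eq_abs (by rwa [abs_of_pos hx]), abs_of_pos hx]
  rw [larc_int_mul_eq (by rwa [abs_of_pos hx]) (by rwa [abs_mul, abs_of_pos hx]), hlarc]
  field_simp

/-- for `ℤ` with length `ℓ(n) = α|n|`, `α > 0`, the double-dual length
computed over the characters `χ_x(n) = e^{inx}`, `x ∈ (0,2π)`, equals `ℓ`:
`sup_x ℓ^{arc}(e^{inx})·α/ℓ^{arc}(e^{ix}) = α|n|` for every `n ∈ ℤ`. -/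
theorem Ldd_int_characters (α : ℝ) (hα : 0 < α) (n : ℤ) :
    (⨆ x : Set.Ioo (0:ℝ) (2 * Real.pi),
        larc ((n : ℝ) * (x : ℝ)) * α / larc (x : ℝ)) = α * |(n : ℝ)| := by
  obtain ⟨x, hx, hxeq⟩ := exists_mem_Ioo_larc_int_mul_div_larc_eq α n
  refine IsGreatest.csSup_eq ⟨⟨⟨x, hx⟩, hxeq⟩, ?_⟩
  rintro _ ⟨y, rfl⟩
  exact larc_int_mul_div_larc_le hα.le n y
end

section
/- Let H be an infinite-dimensional Hilbert space and θ ∈ (0, 2π). Then there is no differentiable path γ : [0,1] → U(H) with γ(0) = id, γ(1) = e^{iθ}·id, and γ'(t) Hilbert–Schmidt for all t. Consequently the arclength distance d^{arc}(id, e^{iθ} id) = +∞. -/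
open scoped ENNReal

/-- a continuous linear operator on a Hilbert space is Hilbert–Schmidt if
`∑ ‖A(e_i)‖²` converges for some Hilbert basis `(e_i)`. -/
def IsHilbertSchmidt {H : Type*} [NormedAddCommGroup H] [InnerProductSpace ℂ H]
    (A : H →L[ℂ] H) : Prop :=
  ∃ (ι : Type) (b : HilbertBasis ι ℂ H), Summable fun i => ‖A (b i)‖ ^ 2

/-!
A Hilbert–Schmidt operator is compact: the truncations `x ↦ ∑_{i ∈ s} ⟪bᵢ, x⟫ A bᵢ` have finite
rank and, by Cauchy–Schwarz and Bessel, differ from `A` in operator norm by at most the square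
root of the tail `∑_{i ∉ s} ‖A bᵢ‖²`. Since the compact operators form a closed subspace, a path
`γ` with Hilbert–Schmidt derivative has zero derivative in the quotient by them, so
`γ 1 - γ 0 = (e^{iθ} - 1) • 1` is compact; a nonzero multiple of the identity is compact only in
finite dimension.
-/

open Set Filter Topology Real

theorem ContinuousLinearMap.isCompactOperator_smulRight {𝕜 E F : Type*}
    [NontriviallyNormedField 𝕜] [ProperSpace 𝕜] [NormedAddCommGroup E] [NormedSpace 𝕜 E]
    [NormedAddCommGroup F] [NormedSpace 𝕜 F] (φ : E →L[𝕜] 𝕜) (v : F) :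
    IsCompactOperator (φ.smulRight v) :=
  (isCompactOperator_of_locallyCompactSpace_rng (toSpanSingleton 𝕜 v)).comp_clm φ

section HilbertSchmidt

variable {𝕜 E F ι : Type*} [RCLike 𝕜] [NormedAddCommGroup E] [InnerProductSpace 𝕜 E]
  [NormedAddCommGroup F] [NormedSpace 𝕜 F]

theorem HilbertBasis.norm_apply_sub_sum_le (b : HilbertBasis ι 𝕜 E) (A : E →L[𝕜] F)
    (hA : Summable fun i => ‖A (b i)‖ ^ 2) (s : Finset ι) (x : E) :
    ‖A x - ∑ i ∈ s, b.repr x i • A (b i)‖ ≤ ‖x‖ * √(∑' i : {i // i ∉ s}, ‖A (b i)‖ ^ 2) := by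
  have hsum : HasSum (fun i : {i // i ∉ s} => b.repr x i • A (b i))
      (A x - ∑ i ∈ s, b.repr x i • A (b i)) :=
    (s.hasSum_compl_iff (f := fun i => b.repr x i • A (b i))).2 <| by
      simpa using A.hasSum (b.hasSum_repr x)
  refine le_of_tendsto' (tendsto_norm.comp hsum) fun t => ?_
  have hbessel : ∑ j ∈ t, ‖b.repr x j‖ ^ 2 ≤ ‖x‖ ^ 2 := by
    simpa only [b.repr_apply_apply, Function.comp_apply] using
      (b.orthonormal.comp _ Subtype.val_injective).sum_inner_products_le x (s := t)
  calc ‖∑ j ∈ t, b.repr x j • A (b j)‖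
      ≤ ∑ j ∈ t, ‖b.repr x j‖ * ‖A (b j)‖ := norm_sum_le_of_le t fun j _ => (norm_smul _ _).le
    _ ≤ √(∑ j ∈ t, ‖b.repr x j‖ ^ 2) * √(∑ j ∈ t, ‖A (b j)‖ ^ 2) :=
        Real.sum_mul_le_sqrt_mul_sqrt _ _ _
    _ ≤ ‖x‖ * √(∑' i : {i // i ∉ s}, ‖A (b i)‖ ^ 2) := by
        gcongr
        · exact (Real.sqrt_le_left (norm_nonneg x)).2 hbessel
        · exact (hA.subtype _).sum_le_tsum t fun _ _ => sq_nonneg _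

theorem HilbertBasis.isCompactOperator_of_summable_norm_sq [CompleteSpace F]
    (b : HilbertBasis ι 𝕜 E) {A : E →L[𝕜] F} (hA : Summable fun i => ‖A (b i)‖ ^ 2) :
    IsCompactOperator A := by
  classical
  let T : Finset ι → E →L[𝕜] F := fun s => ∑ i ∈ s, (innerSL 𝕜 (b i)).smulRight (A (b i))
  have hT : ∀ s x, T s x = ∑ i ∈ s, b.repr x i • A (b i) := fun s x => by
    simp [T, b.repr_apply_apply]
  have hdist : ∀ s, ‖A - T s‖ ≤ √(∑' i : {i // i ∉ s}, ‖A (b i)‖ ^ 2) := fun s =>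
    ContinuousLinearMap.opNorm_le_bound' _ (Real.sqrt_nonneg _) fun x _ => by
      rw [mul_comm, sub_apply, hT]
      exact b.norm_apply_sub_sum_le A hA s x
  have hlim : Tendsto T atTop (𝓝 A) := by
    rw [tendsto_iff_norm_sub_tendsto_zero]
    refine squeeze_zero (fun _ => norm_nonneg _) (fun s => norm_sub_rev (T s) A ▸ hdist s) ?_
    simpa using (tendsto_tsum_compl_atTop_zero fun i => ‖A (b i)‖ ^ 2).sqrt
  refine isCompactOperator_of_tendsto hlim (Eventually.of_forall fun s => ?_)
  exact (compactOperator _ E F).sum_mem fun i _ =>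
    (innerSL 𝕜 (b i)).isCompactOperator_smulRight (A (b i))

end HilbertSchmidt

theorem sub_mem_of_forall_hasDerivAt_mem {E : Type*} [NormedAddCommGroup E] [NormedSpace ℝ E]
    {S : Submodule ℝ E} (hS : IsClosed (S : Set E)) {f : ℝ → E} {a b : ℝ} (hab : a ≤ b)
    (hf : ∀ t ∈ Icc a b, ∃ f' ∈ S, HasDerivAt f f' t) : f b - f a ∈ S := by
  have := hS -- makes `E ⧸ S` a normed space
  have hcont : ContinuousOn (S.mkQL ∘ f) (Icc a b) := fun t ht =>
    let ⟨_, _, hd⟩ := hf t ht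
    (S.mkQL.continuous.continuousAt.comp hd.continuousAt).continuousWithinAt
  have hderiv : ∀ t ∈ Ico a b, HasDerivWithinAt (S.mkQL ∘ f) 0 (Ici t) t := by
    intro t ht
    obtain ⟨f', hf'S, hd⟩ := hf t (Ico_subset_Icc_self ht)
    have hf'0 : S.mkQL f' = 0 := (Submodule.Quotient.mk_eq_zero S).2 hf'S
    simpa [hf'0] using (S.mkQL.hasFDerivAt.comp_hasDerivAt t hd).hasDerivWithinAt
  exact (Submodule.Quotient.eq S).1 <|
    constant_of_has_deriv_right_zero hcont hderiv b (right_mem_Icc.2 hab)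

theorem FiniteDimensional.of_isCompactOperator_smul_one {𝕜 E : Type*} [NontriviallyNormedField 𝕜]
    [CompleteSpace 𝕜] [NormedAddCommGroup E] [NormedSpace 𝕜 E] {c : 𝕜} (hc : c ≠ 0)
    (h : IsCompactOperator (c • 1 : E →L[𝕜] E)) : FiniteDimensional 𝕜 E := by
  have hid : IsCompactOperator (c⁻¹ • c • 1 : E →L[𝕜] E) := h.smul c⁻¹
  rw [smul_smul, inv_mul_cancel₀ hc, one_smul] at hid
  exact .of_isCompactOperator_id hid

theorem Complex.exp_mul_I_ne_one {θ : ℝ} (hθ : θ ∈ Ioo 0 (2 * π)) : exp (θ * I) ≠ 1 := by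
  rw [← Circle.coe_exp, ← Circle.coe_one, Ne, Circle.coe_inj, Circle.exp_eq_one]
  rintro ⟨n, rfl⟩
  have h0 : (0 : ℝ) < n := pos_of_mul_pos_left hθ.1 two_pi_pos.le
  have h1 : (n : ℝ) < 1 := by nlinarith [hθ.2, two_pi_pos]
  have : (0 : ℤ) < n := mod_cast h0
  have : n < 1 := mod_cast h1
  omega

theorem IsHilbertSchmidt.isCompactOperator {H : Type*} [NormedAddCommGroup H]
    [InnerProductSpace ℂ H] [CompleteSpace H] {A : H →L[ℂ] H} (hA : IsHilbertSchmidt A) :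
    IsCompactOperator A :=
  let ⟨_, b, hb⟩ := hA
  b.isCompactOperator_of_summable_norm_sq hb

theorem eq_one_of_hilbertSchmidt_path_to_smul_one {H : Type*} [NormedAddCommGroup H]
    [InnerProductSpace ℂ H] [CompleteSpace H] (hinf : ¬ FiniteDimensional ℂ H)
    {γ : ℝ → H →L[ℂ] H} {c : ℂ} (h0 : γ 0 = 1) (h1 : γ 1 = c • 1)
    (hD : ∀ t ∈ Icc (0 : ℝ) 1, ∃ D : H →L[ℂ] H, HasDerivAt γ D t ∧ IsHilbertSchmidt D) :
    c = 1 := by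
  have hcompact : γ 1 - γ 0 ∈ (compactOperator (RingHom.id ℂ) H H).restrictScalars ℝ :=
    sub_mem_of_forall_hasDerivAt_mem isClosed_setOfPred_isCompactOperator zero_le_one
      fun t ht => (hD t ht).imp fun D hD => ⟨hD.2.isCompactOperator, hD.1⟩
  have hdiff : γ 1 - γ 0 = (c - 1) • (1 : H →L[ℂ] H) := by rw [h0, h1, sub_smul, one_smul]
  by_contra hc
  exact hinf (.of_isCompactOperator_smul_one (sub_ne_zero.2 hc) (hdiff ▸ hcompact))

/-- on an infinite dimensional Hilbert space, there is no differentiable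
path of unitaries with Hilbert–Schmidt derivative from `id` to `e^{iθ}·id` for
`θ ∈ (0,2π)`; consequently the arclength distance (an infimum over the empty set of such
paths) is `+∞`. -/
theorem no_HS_path_to_scalar {H : Type*} [NormedAddCommGroup H]
    [InnerProductSpace ℂ H] [CompleteSpace H]
    (hinf : ¬ FiniteDimensional ℂ H)
    (θ : ℝ) (hθ : θ ∈ Set.Ioo (0:ℝ) (2 * Real.pi)) :
    (¬ ∃ γ : ℝ → (H →L[ℂ] H),
        (∀ t ∈ Set.Icc (0:ℝ) 1, γ t ∈ unitary (H →L[ℂ] H)) ∧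
        γ 0 = 1 ∧ γ 1 = Complex.exp (θ * Complex.I) • (1 : H →L[ℂ] H) ∧
        (∀ t ∈ Set.Icc (0:ℝ) 1, ∃ D : H →L[ℂ] H,
          HasDerivAt γ D t ∧ IsHilbertSchmidt D)) ∧
    (∀ arclen : (ℝ → (H →L[ℂ] H)) → ℝ≥0∞,
      sInf (arclen '' {γ : ℝ → (H →L[ℂ] H) |
        (∀ t ∈ Set.Icc (0:ℝ) 1, γ t ∈ unitary (H →L[ℂ] H)) ∧
        γ 0 = 1 ∧ γ 1 = Complex.exp (θ * Complex.I) • (1 : H →L[ℂ] H) ∧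
        (∀ t ∈ Set.Icc (0:ℝ) 1, ∃ D : H →L[ℂ] H,
          HasDerivAt γ D t ∧ IsHilbertSchmidt D)}) = ⊤) := by
  refine (fun hno => ⟨hno, fun _ => sInf_eq_top.2 ?_⟩) ?_
  · rintro ⟨_, -, h0, h1, hD⟩
    exact Complex.exp_mul_I_ne_one hθ (eq_one_of_hilbertSchmidt_path_to_smul_one hinf h0 h1 hD)
  · rintro _ ⟨γ, hγ, -⟩
    exact (hno ⟨γ, hγ⟩).elim
end
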